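/- Suppose a = 0. Then the quadratic form Q = b·z2² + c·z3² + 2d·z1z2 + 2e·z1z3 + 2f·z2z3 factors as Q = L1·L2 for some degree-one elements L1, L2 of S if and only if D7(M) = (μ23·cd² − 2def + be²)·(μ13μ21·cd² − 2def + μ12μ23μ31·be²) = 0. -/

import Mathlib

/-!
Since `a = 0` forces `p₁ q₁ = 0`, one of the two linear factors misses `z₁`. If `q₁ = 0`, then
`Q = (p₁ z₁ + p₂ z₂ + p₃ z₃)(q₂ z₂ + q₃ z₃)`, and eliminating `p₁, q₂, q₃` through `p₁ q₂ = 2d`,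
`p₁ q₃ = 2e` leaves exactly the first factor of `D7`; conversely a root of that factor gives
explicit factors (when `d = e = 0`, a binary quadratic form, which splits over an algebraically
closed field). The case `p₁ = 0` reduces to the previous one by swapping the two factors and
rescaling `z₂, z₃`, which changes `μ23` and `f` and turns the first factor of `D7` into the second.
-/

/-- `Q = L·L'` in the skew polynomial algebra on three generators (relations
`zj·zi = μij·zi·zj` for `i < j`), expressed via coefficients; here
`L = p.1·z1 + p.2.1·z2 + p.2.2·z3` and `L' = q.1·z1 + q.2.1·z2 + q.2.2·z3`. -/
def IsFactorization3 {k : Type*} [Field k] (μ12 μ13 μ23 a b c d e f : k)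
    (p q : k × k × k) : Prop :=
  p.1 * q.1 = a ∧ p.2.1 * q.2.1 = b ∧ p.2.2 * q.2.2 = c ∧
  p.1 * q.2.1 + μ12 * p.2.1 * q.1 = 2 * d ∧
  p.1 * q.2.2 + μ13 * p.2.2 * q.1 = 2 * e ∧
  p.2.1 * q.2.2 + μ23 * p.2.2 * q.2.1 = 2 * f

section

variable {k : Type*} [Field k]

theorem exists_skew_binary_factorization [IsAlgClosed k] {ν : k} (hν : ν ≠ 0) (b c f : k) :
    ∃ x₂ x₃ y₂ y₃ : k, x₂ * y₂ = b ∧ x₃ * y₃ = c ∧ x₂ * y₃ + ν * x₃ * y₂ = 2 * f := by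
  by_cases hb : b = 0
  · exact ⟨0, 1, 2 * f / ν, c, by simp [hb], by simp, by field_simp; ring⟩
  open Polynomial in
  obtain ⟨t, ht⟩ := IsAlgClosed.exists_root (C (ν * b) * X ^ 2 + C (-(2 * f)) * X + C c)
    (by rw [degree_quadratic (mul_ne_zero hν hb)]; decide)
  simp only [IsRoot, eval_add, eval_mul, eval_C, eval_pow, eval_X] at ht
  exact ⟨1, t, b, 2 * f - ν * b * t, by ring, by linear_combination -ht, by ring⟩

theorem exists_isFactorization3_zero_iff_or {μ12 μ13 μ23 b c d e f : k} :
    (∃ p q, IsFactorization3 μ12 μ13 μ23 0 b c d e f p q) ↔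
      (∃ p q, IsFactorization3 μ12 μ13 μ23 0 b c d e f p q ∧ q.1 = 0) ∨
        ∃ p q, IsFactorization3 μ12 μ13 μ23 0 b c d e f p q ∧ p.1 = 0 := by
  constructor
  · rintro ⟨p, q, h⟩
    rcases mul_eq_zero.mp h.1 with hp | hq
    exacts [.inr ⟨p, q, h, hp⟩, .inl ⟨p, q, h, hq⟩]
  · rintro (⟨p, q, h, -⟩ | ⟨p, q, h, -⟩) <;> exact ⟨p, q, h⟩

theorem discr_eq_zero_of_isFactorization3 (h2 : (2 : k) ≠ 0) {μ12 μ13 μ23 b c d e f : k}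
    {p q : k × k × k} (h : IsFactorization3 μ12 μ13 μ23 0 b c d e f p q) (hq : q.1 = 0) :
    μ23 * c * d ^ 2 - 2 * d * e * f + b * e ^ 2 = 0 := by
  obtain ⟨p₁, p₂, p₃⟩ := p
  obtain ⟨q₁, q₂, q₃⟩ := q
  obtain ⟨-, hb, hc, hd, he, hf⟩ := h
  dsimp only at hq hb hc hd he hf
  subst hq
  have : 2 ^ 2 * (μ23 * c * d ^ 2 - 2 * d * e * f + b * e ^ 2) = 0 := by
    linear_combination (2 * e * (2 * f) - μ23 * c * (p₁ * q₂ + 2 * d)) * hd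
      - μ23 * (p₁ * q₂) ^ 2 * hc + (p₁ * q₂ * (2 * f) - b * (p₁ * q₃ + 2 * e)) * he
      + p₁ * q₂ * (p₁ * q₃) * hf - (p₁ * q₃) ^ 2 * hb
  simpa [h2] using this

theorem exists_isFactorization3_of_discr_eq_zero [IsAlgClosed k] {μ12 μ13 μ23 b c d e f : k}
    (hμ23 : μ23 ≠ 0) (hD : μ23 * c * d ^ 2 - 2 * d * e * f + b * e ^ 2 = 0) :
    ∃ p q, IsFactorization3 μ12 μ13 μ23 0 b c d e f p q ∧ q.1 = 0 := by
  by_cases hd : d = 0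
  · subst hd
    by_cases he : e = 0
    · subst he
      obtain ⟨x₂, x₃, y₂, y₃, hb, hc, hf⟩ := exists_skew_binary_factorization hμ23 b c f
      exact ⟨(0, x₂, x₃), (0, y₂, y₃), ⟨by simp, hb, hc, by simp, by simp, hf⟩, rfl⟩
    · have hb : b = 0 := by simpa [he] using hD
      exact ⟨(2 * e, 2 * f, c), (0, 0, 1), ⟨by simp, by simp [hb], by simp, by simp,
        by simp, by simp⟩, rfl⟩
  · refine ⟨(2 * d, b, (2 * f * d - b * e) / (μ23 * d)), (0, 1, e / d),
      ⟨by simp, by simp, ?_, by simp, by field_simp; ring, by field_simp; ring⟩, rfl⟩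
    field_simp
    linear_combination -hD

theorem exists_isFactorization3_snd_eq_zero_iff [IsAlgClosed k] (h2 : (2 : k) ≠ 0)
    {μ12 μ13 μ23 b c d e f : k} (hμ23 : μ23 ≠ 0) :
    (∃ p q, IsFactorization3 μ12 μ13 μ23 0 b c d e f p q ∧ q.1 = 0) ↔
      μ23 * c * d ^ 2 - 2 * d * e * f + b * e ^ 2 = 0 :=
  ⟨fun ⟨_, _, h, hq⟩ ↦ discr_eq_zero_of_isFactorization3 h2 h hq,
    exists_isFactorization3_of_discr_eq_zero hμ23⟩

theorem exists_isFactorization3_fst_eq_zero_iff {μ12 μ13 μ23 b c d e f : k}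
    (hμ12 : μ12 ≠ 0) (hμ13 : μ13 ≠ 0) (hμ23 : μ23 ≠ 0) :
    (∃ p q, IsFactorization3 μ12 μ13 μ23 0 b c d e f p q ∧ p.1 = 0) ↔
      ∃ p q, IsFactorization3 μ12 μ13 (μ13 ^ 2 / (μ12 ^ 2 * μ23)) 0 b c d e
        (μ13 / (μ12 * μ23) * f) p q ∧ q.1 = 0 := by
  constructor
  · rintro ⟨⟨p₁, p₂, p₃⟩, ⟨q₁, q₂, q₃⟩, ⟨-, hb, hc, hd, he, hf⟩, rfl : p₁ = 0⟩
    exact ⟨(q₁, q₂ / μ12, q₃ / μ13), (0, μ12 * p₂, μ13 * p₃),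
      ⟨by simp, by field_simp; linear_combination hb, by field_simp; linear_combination hc,
        by field_simp; linear_combination hd, by field_simp; linear_combination he,
        by field_simp; linear_combination hf⟩, rfl⟩
  · rintro ⟨⟨r, x₂, x₃⟩, ⟨q₁, y₂, y₃⟩, ⟨-, hb, hc, hd, he, hf⟩, rfl : q₁ = 0⟩
    dsimp only at hb hc hd he hf
    field_simp at hf
    exact ⟨(0, y₂ / μ12, y₃ / μ13), (r, μ12 * x₂, μ13 * x₃),
      ⟨by simp, by field_simp; linear_combination hb, by field_simp; linear_combination hc,
        by field_simp; linear_combination hd, by field_simp; linear_combination he,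
        by field_simp; linear_combination hf⟩, rfl⟩

end

/-- When `a = 0`, the quadratic form
`Q = b·z2² + c·z3² + 2d·z1z2 + 2e·z1z3 + 2f·z2z3` factors as a product of two
degree-one elements if and only if `D7(M) = 0`. -/
theorem factors_iff_D7_eq_zero {k : Type*} [Field k] [IsAlgClosed k]
    (h2 : (2 : k) ≠ 0) (μ12 μ13 μ23 : k)
    (hμ12 : μ12 ≠ 0) (hμ13 : μ13 ≠ 0) (hμ23 : μ23 ≠ 0)
    (b c d e f : k) :
    (∃ p q : k × k × k, IsFactorization3 μ12 μ13 μ23 0 b c d e f p q) ↔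
      (μ23 * c * d ^ 2 - 2 * d * e * f + b * e ^ 2) *
        (μ13 * μ12⁻¹ * c * d ^ 2 - 2 * d * e * f +
          μ12 * μ23 * μ13⁻¹ * b * e ^ 2) = 0 := by
  have hρ : μ13 / (μ12 * μ23) ≠ 0 := by positivity
  have hν : μ13 ^ 2 / (μ12 ^ 2 * μ23) ≠ 0 := by positivity
  have hscale : μ13 ^ 2 / (μ12 ^ 2 * μ23) * c * d ^ 2 - 2 * d * e * (μ13 / (μ12 * μ23) * f)
      + b * e ^ 2 = μ13 / (μ12 * μ23) * (μ13 * μ12⁻¹ * c * d ^ 2 - 2 * d * e * f +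
        μ12 * μ23 * μ13⁻¹ * b * e ^ 2) := by
    field_simp
  rw [exists_isFactorization3_zero_iff_or, exists_isFactorization3_snd_eq_zero_iff h2 hμ23,
    exists_isFactorization3_fst_eq_zero_iff hμ12 hμ13 hμ23,
    exists_isFactorization3_snd_eq_zero_iff h2 hν, hscale, mul_eq_zero, mul_eq_zero,
    or_iff_right hρ]
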